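/- For all integers k ≥ 3 and n ≥ k, the positive co-degree Turán number of J_k satisfies (k−2)·⌊n/k⌋ ≤ co⁺ex(n, J_k) ≤ ((k−2)/(k−1))·n. -/

import Mathlib

open Finset

/-- The co-degree of a vertex set `S` in the hypergraph with edge set `E`:
the number of edges containing `S`. -/
def coDeg {n : ℕ} (E : Finset (Finset (Fin n))) (S : Finset (Fin n)) : ℕ :=
  (E.filter (fun e => S ⊆ e)).card

/-- The minimum positive co-degree `δ⁺_{r-1}` of an `r`-graph on `Fin n` with edge set `E`:
the largest `k` such that every `(r-1)`-set of vertices contained in at least one edge is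
contained in at least `k` edges (i.e. the minimum of the positive co-degrees). -/
noncomputable def minPosCoDeg (r n : ℕ) (E : Finset (Finset (Fin n))) : ℕ :=
  sInf {d : ℕ | ∃ S : Finset (Fin n), S.card = r - 1 ∧ coDeg E S = d ∧ 0 < d}

/-- `E` contains a copy of `F`: an injection of the vertices of `F` mapping
edges of `F` to edges of `E`. -/
def Contains {α β : Type*} [DecidableEq α] [DecidableEq β]
    (F : Finset (Finset α)) (E : Finset (Finset β)) : Prop :=
  ∃ f : α → β, Function.Injective f ∧ ∀ e ∈ F, e.image f ∈ E

/-- The positive co-degree Turán number `co⁺ex_r(n, F)`: the maximum of the minimum positive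
co-degree over all `F`-free `r`-graphs on `n` vertices with at least one edge. -/
noncomputable def coPlusEx {α : Type*} [DecidableEq α] (r n : ℕ) (F : Finset (Finset α)) : ℕ :=
  sSup {d : ℕ | ∃ E : Finset (Finset (Fin n)),
    (∀ e ∈ E, e.card = r) ∧ E.Nonempty ∧ ¬ Contains F E ∧ minPosCoDeg r n E = d}


def K4minus : Finset (Finset (Fin 4)) := {{0,1,2}, {0,1,3}, {0,2,3}}

def K4 : Finset (Finset (Fin 4)) := {{0,1,2}, {0,1,3}, {0,2,3}, {1,2,3}}

def F5 : Finset (Finset (Fin 5)) := {{0,1,2}, {0,1,3}, {2,3,4}}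

def F32 : Finset (Finset (Fin 5)) := {{0,1,2}, {0,3,4}, {1,3,4}, {2,3,4}}

def Fano : Finset (Finset (Fin 7)) :=
  {{0,1,2}, {2,3,4}, {0,4,5}, {1,3,5}, {0,3,6}, {1,4,6}, {2,5,6}}

def F33 : Finset (Finset (Fin 6)) :=
  {{0,1,2}, {0,3,4}, {0,3,5}, {0,4,5}, {1,3,4}, {1,3,5}, {1,4,5}, {2,3,4}, {2,3,5}, {2,4,5}}

def C5 : Finset (Finset (Fin 5)) := {{0,1,2}, {1,2,3}, {2,3,4}, {0,3,4}, {0,1,4}}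

def C5minus : Finset (Finset (Fin 5)) := {{0,1,2}, {1,2,3}, {2,3,4}, {0,3,4}}

def K222 : Finset (Finset (Fin 6)) :=
  {{0,2,4}, {0,2,5}, {0,3,4}, {0,3,5}, {1,2,4}, {1,2,5}, {1,3,4}, {1,3,5}}

/-- `J k`: the 3-graph on `k+1` vertices whose edges are all triples containing the
distinguished vertex `0`. -/
def Jgraph (k : ℕ) : Finset (Finset (Fin (k+1))) :=
  (Finset.univ.powersetCard 3).filter (fun e => (0 : Fin (k+1)) ∈ e)

/-- `E` is (isomorphic to) the complete balanced `k`-partite 3-graph on `n` vertices: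
there is a partition of the vertices into `k` classes whose sizes differ by at most one,
such that the edges are exactly the triples of vertices in three pairwise distinct classes. -/
def IsCompleteBalancedMultipartite (n k : ℕ) (E : Finset (Finset (Fin n))) : Prop :=
  ∃ f : Fin n → Fin k,
    (∀ i j : Fin k, (Finset.univ.filter (fun v => f v = i)).card ≤
      (Finset.univ.filter (fun v => f v = j)).card + 1) ∧
    ∀ e : Finset (Fin n), e ∈ E ↔ (e.card = 3 ∧ (e.image f).card = 3)

/-- The unique (6,3,2)-design `H₆`. -/
def H6 : Finset (Finset (Fin 6)) :=
  {{0,1,2}, {0,1,3}, {2,3,4}, {2,3,5}, {0,4,5}, {1,4,5}, {0,2,4}, {0,3,5}, {1,2,5}, {1,3,4}}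

/-- `E` is (isomorphic to) a balanced blow-up of `H₆` on `n` vertices: the vertices are
partitioned into six classes of equal size, and the edges are exactly the triples whose
three vertices lie in classes forming an edge of `H₆`. -/
def IsBalancedH6Blowup (n : ℕ) (E : Finset (Finset (Fin n))) : Prop :=
  ∃ f : Fin n → Fin 6,
    (∀ i j : Fin 6, (Finset.univ.filter (fun v => f v = i)).card =
      (Finset.univ.filter (fun v => f v = j)).card) ∧
    ∀ e : Finset (Fin n), e ∈ E ↔ (e.card = 3 ∧ e.image f ∈ H6)

/-!
Upper bound: in the link graph of a vertex `x`, every non-isolated vertex `a` has degree at least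
`coDeg {x, a} ≥ δ₂⁺(H) =: δ`, so at most `|T| (n - δ)` vertices lie outside the common
neighbourhood of a clique `T`. If `(k - 1) δ > (k - 2) n` this is less than `n`, so an edge of the
link grows greedily into a `k`-clique, which together with `x` spans a copy of `J_k`.

Lower bound: colour the vertices with `k` colours, each used at least `⌊n/k⌋` times, and take all
rainbow triples. Any two vertices of `J_k` lie in a common edge, so a copy of `J_k` would need
`k + 1` distinct colours; and a covered pair extends to an edge through every vertex of the other
`k - 2` colours.
-/

section MinPosCoDeg

variable {r n : ℕ} {E : Finset (Finset (Fin n))}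

theorem minPosCoDeg_le_coDeg {S : Finset (Fin n)} (hS : S.card = r - 1) (hpos : 0 < coDeg E S) :
    minPosCoDeg r n E ≤ coDeg E S :=
  Nat.sInf_le ⟨S, hS, rfl, hpos⟩

theorem le_minPosCoDeg {d : ℕ} (hE : ∀ e ∈ E, e.card = r) (hne : E.Nonempty)
    (h : ∀ S : Finset (Fin n), S.card = r - 1 → 0 < coDeg E S → d ≤ coDeg E S) :
    d ≤ minPosCoDeg r n E := by
  obtain ⟨e, he⟩ := hne
  obtain ⟨S, hSe, hS⟩ := exists_subset_card_eq (s := e) (n := r - 1) (by rw [hE e he]; omega)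
  refine le_csInf ⟨_, S, hS, rfl, card_pos.2 ⟨e, mem_filter.2 ⟨he, hSe⟩⟩⟩ ?_
  rintro _ ⟨S, hS, rfl, hpos⟩
  exact h S hS hpos

theorem minPosCoDeg_le_card : minPosCoDeg r n E ≤ E.card := by
  rcases Set.eq_empty_or_nonempty
      {d | ∃ S : Finset (Fin n), S.card = r - 1 ∧ coDeg E S = d ∧ 0 < d} with h | h
  · simp [minPosCoDeg, h]
  · obtain ⟨S, -, hS, -⟩ := Nat.sInf_mem h
    rw [minPosCoDeg, ← hS]
    exact card_filter_le _ _

end MinPosCoDeg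

section CoPlusEx

variable {α : Type*} [DecidableEq α] {r n : ℕ} {F : Finset (Finset α)}

theorem minPosCoDeg_le_coPlusEx {E : Finset (Finset (Fin n))} (hE : ∀ e ∈ E, e.card = r)
    (hne : E.Nonempty) (hfree : ¬ Contains F E) : minPosCoDeg r n E ≤ coPlusEx r n F := by
  refine le_csSup ⟨Fintype.card (Finset (Fin n)), ?_⟩ ⟨E, hE, hne, hfree, rfl⟩
  rintro _ ⟨E', -, -, -, rfl⟩
  exact minPosCoDeg_le_card.trans (card_le_univ E')

theorem coPlusEx_le {B : ℕ} (h : ∀ E : Finset (Finset (Fin n)), (∀ e ∈ E, e.card = r) →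
      E.Nonempty → ¬ Contains F E → minPosCoDeg r n E ≤ B) :
    coPlusEx r n F ≤ B :=
  csSup_le' <| by
    rintro _ ⟨E, hE, hne, hfree, rfl⟩
    exact h E hE hne hfree

end CoPlusEx

theorem Finset.exists_forall_mem_of_card_mul_sub_lt {ι α : Type*} [Fintype α] [DecidableEq α]
    {T : Finset ι} {N : ι → Finset α} {d : ℕ} (hN : ∀ i ∈ T, d ≤ (N i).card)
    (hT : T.card * (Fintype.card α - d) < Fintype.card α) : ∃ w, ∀ i ∈ T, w ∈ N i := by
  by_contra! h
  have hcover : (univ : Finset α) ⊆ T.biUnion fun i => (N i)ᶜ := fun w _ => by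
    obtain ⟨i, hi, hw⟩ := h w
    exact mem_biUnion.2 ⟨i, hi, mem_compl.2 hw⟩
  have := calc Fintype.card α
      = (univ : Finset α).card := card_univ.symm
    _ ≤ (T.biUnion fun i => (N i)ᶜ).card := card_le_card hcover
    _ ≤ ∑ i ∈ T, (N i)ᶜ.card := card_biUnion_le
    _ ≤ ∑ _i ∈ T, (Fintype.card α - d) := sum_le_sum fun i hi => by
        rw [card_compl]; have := hN i hi; omega
    _ = T.card * (Fintype.card α - d) := by rw [sum_const, smul_eq_mul]
  omega

section Link

def linkGraph {n : ℕ} (E : Finset (Finset (Fin n))) (x : Fin n) : SimpleGraph (Fin n) where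
  Adj a b := a ≠ b ∧ {x, a, b} ∈ E
  symm := ⟨fun _ _ h => ⟨h.1.symm, by rw [pair_comm]; exact h.2⟩⟩
  loopless := ⟨fun _ h => h.1 rfl⟩

instance {n : ℕ} (E : Finset (Finset (Fin n))) (x : Fin n) :
    DecidableRel (linkGraph E x).Adj := fun a b =>
  decidable_of_iff (a ≠ b ∧ {x, a, b} ∈ E) Iff.rfl

variable {n : ℕ} {E : Finset (Finset (Fin n))} {x : Fin n}

theorem ne_of_linkGraph_adj (hE : ∀ e ∈ E, e.card = 3) {a b : Fin n}
    (h : (linkGraph E x).Adj a b) : x ≠ b := by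
  rintro rfl
  have := hE _ h.2
  rw [pair_comm, insert_eq_of_mem (mem_insert_self _ _)] at this
  have := card_le_two (a := x) (b := a)
  omega

theorem coDeg_pair_le_degree_linkGraph (hE : ∀ e ∈ E, e.card = 3) {a : Fin n} (hxa : x ≠ a) :
    coDeg E {x, a} ≤ (linkGraph E x).degree a := by
  rw [← SimpleGraph.card_neighborFinset_eq_degree, coDeg]
  refine card_le_card_of_surjOn (fun b => {x, a, b}) fun e he => ?_
  obtain ⟨heE, hxae⟩ := mem_filter.1 he
  obtain ⟨b, hb⟩ : ∃ b, e \ {x, a} = {b} := card_eq_one.1 <| by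
    rw [card_sdiff_of_subset hxae, hE e heE, card_pair hxa]
  have hbe : b ∈ e \ {x, a} := hb ▸ mem_singleton_self b
  have hab : a ≠ b := fun h => (mem_sdiff.1 hbe).2 (h ▸ by simp)
  have he_eq : ({x, a, b} : Finset (Fin n)) = e := by
    rw [← sdiff_union_of_subset hxae, hb]
    ext; simp only [mem_insert, mem_singleton, mem_union]; tauto
  exact ⟨b, (SimpleGraph.mem_neighborFinset _ _ _).2 ⟨hab, he_eq ▸ heE⟩, he_eq⟩

theorem minPosCoDeg_le_degree_linkGraph (hE : ∀ e ∈ E, e.card = 3) {a b : Fin n}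
    (h : (linkGraph E x).Adj a b) : minPosCoDeg 3 n E ≤ (linkGraph E x).degree a := by
  have hxa : x ≠ a := ne_of_linkGraph_adj hE h.symm
  have hpos : 0 < coDeg E {x, a} :=
    card_pos.2 ⟨_, mem_filter.2 ⟨h.2, by intro y; simp only [mem_insert, mem_singleton]; tauto⟩⟩
  exact (minPosCoDeg_le_coDeg (card_pair hxa) hpos).trans (coDeg_pair_le_degree_linkGraph hE hxa)

theorem exists_isNClique_linkGraph (hE : ∀ e ∈ E, e.card = 3) {k : ℕ} (hk : 2 ≤ k) {u v : Fin n}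
    (huv : (linkGraph E x).Adj u v) (hlt : (k - 1) * (n - minPosCoDeg 3 n E) < n) :
    ∃ T, x ∉ T ∧ (linkGraph E x).IsNClique k T := by
  suffices ∀ j, 2 ≤ j → j ≤ k → ∃ T, x ∉ T ∧ (linkGraph E x).IsNClique j T from this k hk le_rfl
  intro j hj
  induction j, hj using Nat.le_induction with
  | base =>
    refine fun _ => ⟨{u, v}, ?_, (SimpleGraph.isNClique_singleton.2 rfl).insert (by simpa)⟩
    simp [ne_of_linkGraph_adj hE huv.symm, ne_of_linkGraph_adj hE huv]
  | succ j hj ih =>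
    intro hjk
    obtain ⟨T, hxT, hT⟩ := ih (by omega)
    have hdeg : ∀ a ∈ T, minPosCoDeg 3 n E ≤ ((linkGraph E x).neighborFinset a).card := by
      intro a ha
      obtain ⟨b, hb, hba⟩ := exists_mem_ne (by rw [hT.card_eq]; omega) a
      rw [SimpleGraph.card_neighborFinset_eq_degree]
      exact minPosCoDeg_le_degree_linkGraph hE (hT.isClique ha hb hba.symm)
    obtain ⟨w, hw⟩ := exists_forall_mem_of_card_mul_sub_lt hdeg <| by
      rw [Fintype.card_fin, hT.card_eq]
      exact (Nat.mul_le_mul_right _ (by omega)).trans_lt hlt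
    have hadj : ∀ a ∈ T, (linkGraph E x).Adj w a := fun a ha =>
      ((SimpleGraph.mem_neighborFinset _ _ _).1 (hw a ha)).symm
    obtain ⟨a, ha⟩ := card_pos.1 (by rw [hT.card_eq]; omega)
    refine ⟨insert w T, ?_, hT.insert hadj⟩
    simp [hxT, ne_of_linkGraph_adj hE (hadj a ha).symm]

theorem contains_Jgraph_of_isNClique_linkGraph {k : ℕ} {T : Finset (Fin n)} (hxT : x ∉ T)
    (hT : (linkGraph E x).IsNClique k T) : Contains (Jgraph k) E := by
  set g := T.orderEmbOfFin hT.card_eq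
  refine ⟨Fin.cons x g, Fin.cons_injective_iff.2 ⟨?_, g.injective⟩, fun e he => ?_⟩
  · rintro ⟨i, hi⟩
    exact hxT (hi ▸ T.orderEmbOfFin_mem _ i)
  rw [Jgraph, mem_filter, mem_powersetCard_univ] at he
  obtain ⟨i, j, hij, hij_eq⟩ := card_eq_two.1 <| show (e.erase 0).card = 2 by
    rw [card_erase_of_mem he.2, he.1]
  have hi : i ∈ e.erase 0 := by simp [hij_eq]
  have hj : j ∈ e.erase 0 := by simp [hij_eq]
  obtain ⟨i, rfl⟩ := Fin.exists_succ_eq.2 (ne_of_mem_erase hi)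
  obtain ⟨j, rfl⟩ := Fin.exists_succ_eq.2 (ne_of_mem_erase hj)
  rw [← insert_erase he.2, hij_eq, image_insert, image_insert, image_singleton]
  simp only [Fin.cons_zero, Fin.cons_succ]
  exact (hT.isClique (T.orderEmbOfFin_mem _ i) (T.orderEmbOfFin_mem _ j)
    (g.injective.ne fun h => hij (h ▸ rfl))).2

theorem mul_minPosCoDeg_le_of_not_contains_Jgraph {k : ℕ} (hk : 2 ≤ k)
    (hE : ∀ e ∈ E, e.card = 3) (hne : E.Nonempty) (hfree : ¬ Contains (Jgraph k) E) :
    (k - 1) * minPosCoDeg 3 n E ≤ (k - 2) * n := by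
  obtain ⟨e, he⟩ := hne
  obtain ⟨x, u, v, -, -, huv, rfl⟩ := card_eq_three.1 (hE e he)
  by_contra! h
  have hlt : (k - 1) * (n - minPosCoDeg 3 n E) < n := by
    have hn := x.pos
    generalize minPosCoDeg 3 n E = d at h ⊢
    obtain ⟨j, rfl⟩ : ∃ j, k = j + 2 := ⟨k - 2, by omega⟩
    rw [show j + 2 - 1 = j + 1 by omega, Nat.add_sub_cancel] at *
    rcases le_total d n with hd | hd
    · obtain ⟨t, rfl⟩ := Nat.exists_eq_add_of_le hd
      rw [Nat.add_sub_cancel_left]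
      nlinarith
    · rw [Nat.sub_eq_zero_of_le hd, mul_zero]
      exact hn
  obtain ⟨T, hxT, hT⟩ := exists_isNClique_linkGraph hE hk (x := x) ⟨huv, he⟩ hlt
  exact hfree (contains_Jgraph_of_isNClique_linkGraph hxT hT)

end Link

theorem not_contains_of_forall_injOn {α β γ : Type*} [Fintype α] [DecidableEq α] [DecidableEq β]
    [Fintype γ] {F : Finset (Finset α)} {E : Finset (Finset β)} (f : β → γ)
    (hF : ∀ i j, ∃ e ∈ F, i ∈ e ∧ j ∈ e) (hE : ∀ e ∈ E, Set.InjOn f e)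
    (hcard : Fintype.card γ < Fintype.card α) : ¬ Contains F E := by
  rintro ⟨φ, hφ, hmap⟩
  refine hcard.not_ge (Fintype.card_le_of_injective (f ∘ φ) fun i j hij => ?_)
  obtain ⟨e, he, hi, hj⟩ := hF i j
  exact hφ (hE _ (hmap e he) (mem_image_of_mem φ hi) (mem_image_of_mem φ hj) hij)

theorem exists_mem_Jgraph {k : ℕ} (hk : 2 ≤ k) (i j : Fin (k + 1)) :
    ∃ e ∈ Jgraph k, i ∈ e ∧ j ∈ e := by
  obtain ⟨e, hsub, he⟩ := exists_superset_card_eq (s := {0, i, j}) card_le_three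
    (by simp only [Fintype.card_fin]; omega)
  exact ⟨e, mem_filter.2 ⟨mem_powersetCard_univ.2 he, hsub (by simp)⟩, hsub (by simp),
    hsub (by simp)⟩

def multipartiteTriples {n k : ℕ} (f : Fin n → Fin k) : Finset (Finset (Fin n)) :=
  (univ.powersetCard 3).filter fun e => (e.image f).card = 3

section Multipartite

variable {n k : ℕ} {f : Fin n → Fin k}

theorem mem_multipartiteTriples {e : Finset (Fin n)} :
    e ∈ multipartiteTriples f ↔ e.card = 3 ∧ (e.image f).card = 3 := by
  rw [multipartiteTriples, mem_filter, mem_powersetCard_univ]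

theorem injOn_of_mem_multipartiteTriples {e : Finset (Fin n)} (he : e ∈ multipartiteTriples f) :
    Set.InjOn f e := by
  rw [mem_multipartiteTriples] at he
  exact card_image_iff.1 (he.2.trans he.1.symm)

theorem not_contains_Jgraph_multipartiteTriples (hk : 2 ≤ k) :
    ¬ Contains (Jgraph k) (multipartiteTriples f) :=
  not_contains_of_forall_injOn f (exists_mem_Jgraph hk)
    (fun _ => injOn_of_mem_multipartiteTriples) (by simp)

theorem multipartiteTriples_nonempty (hk : 3 ≤ k) (hf : Function.Surjective f) :
    (multipartiteTriples f).Nonempty := by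
  obtain ⟨C, -, hC⟩ := exists_subset_card_eq (s := (univ : Finset (Fin k))) (n := 3) (by simpa)
  refine ⟨C.image (Function.surjInv hf), mem_multipartiteTriples.2 ⟨?_, ?_⟩⟩
  · rw [card_image_of_injective _ (Function.injective_surjInv hf), hC]
  · simp [image_image, Function.comp_def, Function.surjInv_eq hf, hC]

theorem le_coDeg_multipartiteTriples {m : ℕ} (hf : ∀ c, m ≤ (univ.filter (f · = c)).card)
    {u v : Fin n} (huv : f u ≠ f v) : (k - 2) * m ≤ coDeg (multipartiteTriples f) {u, v} := by
  set W := univ.filter fun w => f w ∉ ({f u, f v} : Finset (Fin k))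
  have hW : (k - 2) * m ≤ W.card := by
    rw [card_eq_sum_card_fiberwise (t := {f u, f v}ᶜ) fun w hw => mem_compl.2 (mem_filter.1 hw).2]
    calc (k - 2) * m = ∑ _c ∈ ({f u, f v} : Finset (Fin k))ᶜ, m := by
          rw [sum_const, card_compl, card_pair huv, smul_eq_mul, Fintype.card_fin]
      _ ≤ _ := sum_le_sum fun c hc => (hf c).trans <| card_le_card fun w hw => by
          simp only [mem_filter, mem_univ, true_and] at hw ⊢
          exact ⟨hw ▸ mem_compl.1 hc, hw⟩
  have hWuv : ∀ w ∈ W, w ∉ ({u, v} : Finset (Fin n)) := fun w hw hwuv =>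
    (mem_filter.1 hw).2 (by rcases mem_insert.1 hwuv with rfl | h <;> simp_all)
  refine hW.trans (card_le_card_of_injOn (fun w => insert w {u, v}) (fun w hw => ?_)
    fun w₁ hw₁ w₂ _ h => (insert_inj (hWuv w₁ hw₁)).1 h)
  refine mem_filter.2 ⟨mem_multipartiteTriples.2 ⟨?_, ?_⟩, subset_insert _ _⟩
  · rw [card_insert_of_notMem (hWuv w hw), card_pair fun h => huv (congrArg f h)]
  · rw [image_insert, image_insert, image_singleton,
      card_insert_of_notMem (mem_filter.1 (mem_coe.1 hw)).2, card_pair huv]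

theorem le_minPosCoDeg_multipartiteTriples {m : ℕ} (hf : ∀ c, m ≤ (univ.filter (f · = c)).card)
    (hne : (multipartiteTriples f).Nonempty) :
    (k - 2) * m ≤ minPosCoDeg 3 n (multipartiteTriples f) := by
  refine le_minPosCoDeg (fun e he => (mem_multipartiteTriples.1 he).1) hne fun S hS hpos => ?_
  obtain ⟨e, he⟩ := card_pos.1 hpos
  obtain ⟨heE, hSe⟩ := mem_filter.1 he
  obtain ⟨u, v, huv, rfl⟩ := card_eq_two.1 hS
  exact le_coDeg_multipartiteTriples hf
    ((injOn_of_mem_multipartiteTriples heE).ne (hSe (by simp)) (hSe (by simp)) huv)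

end Multipartite

theorem exists_le_card_fiber (n : ℕ) {k : ℕ} (hk : 0 < k) :
    ∃ f : Fin n → Fin k, ∀ c, n / k ≤ (univ.filter (f · = c)).card := by
  refine ⟨fun v => ⟨v % k, Nat.mod_lt _ hk⟩, fun c => ?_⟩
  have hlt : ∀ j : Fin (n / k), j * k + c < n := fun j =>
    calc j * k + c < (j + 1) * k := by rw [add_mul, one_mul]; exact Nat.add_lt_add_left c.isLt _
      _ ≤ n / k * k := Nat.mul_le_mul_right _ j.isLt
      _ ≤ n := Nat.div_mul_le_self n k
  calc n / k = (univ : Finset (Fin (n / k))).card := by simp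
    _ ≤ _ := card_le_card_of_injOn (fun j => ⟨j * k + c, hlt j⟩)
        (fun j _ => by simp [Fin.ext_iff, Nat.mod_eq_of_lt c.isLt])
        (fun j _ j' _ h => Fin.ext <| Nat.eq_of_mul_eq_mul_right hk <| by simpa using h)

/-- For all `k ≥ 3` and `n ≥ k`, `(k-2)·⌊n/k⌋ ≤ co⁺ex(n, J_k) ≤ ((k-2)/(k-1))·n`. -/
theorem coPlusEx_Jk (k n : ℕ) (hk : 3 ≤ k) (hn : k ≤ n) :
    (k - 2) * (n / k) ≤ coPlusEx 3 n (Jgraph k) ∧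
    (coPlusEx 3 n (Jgraph k) : ℝ) ≤ ((k : ℝ) - 2) / ((k : ℝ) - 1) * n := by
  constructor
  · obtain ⟨f, hf⟩ := exists_le_card_fiber n (by omega : 0 < k)
    have hsurj : Function.Surjective f := fun c => by
      obtain ⟨v, hv⟩ := card_pos.1 ((Nat.div_pos hn (by omega)).trans_le (hf c))
      exact ⟨v, (mem_filter.1 hv).2⟩
    have hne := multipartiteTriples_nonempty hk hsurj
    exact (le_minPosCoDeg_multipartiteTriples hf hne).trans <| minPosCoDeg_le_coPlusEx
      (fun e he => (mem_multipartiteTriples.1 he).1) hne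
      (not_contains_Jgraph_multipartiteTriples (by omega))
  · have h : coPlusEx 3 n (Jgraph k) ≤ (k - 2) * n / (k - 1) :=
      coPlusEx_le fun E hE hne hfree => (Nat.le_div_iff_mul_le (by omega)).2 <| by
        rw [mul_comm]
        exact mul_minPosCoDeg_le_of_not_contains_Jgraph (by omega) hE hne hfree
    calc (coPlusEx 3 n (Jgraph k) : ℝ) ≤ (((k - 2) * n / (k - 1) : ℕ) : ℝ) := by exact_mod_cast h
      _ ≤ ((k - 2) * n : ℕ) / ((k - 1 : ℕ) : ℝ) := Nat.cast_div_le
      _ = ((k : ℝ) - 2) / ((k : ℝ) - 1) * n := by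
        push_cast [Nat.cast_sub (by omega : 2 ≤ k), Nat.cast_sub (by omega : 1 ≤ k)]
        ring
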